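/- Let H₀ and H₁ be complex Hilbert spaces, let T₀ be a bounded operator on H₀ and T₁ a bounded operator on H₁, and let X : H₁ → H₀ be a bounded linear operator. Define the bounded operator T on H₀ ⊕ H₁ in block form by T(x, y) = (T₀x + (XT₁ − T₀X)y, T₁y). If T₀ and T₁ are weakly homogeneous, then T is weakly homogeneous. -/

import Mathlib

noncomputable section

open Complex Metric
/-- The block operator `(x, y) ↦ (T₀ x + (X T₁ − T₀ X) y, T₁ y)` on the Hilbert space
direct sum `H₀ ⊕ H₁`. -/
def blockT2 {H0 H1 : Type*} [NormedAddCommGroup H0] [NormedSpace ℂ H0]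
    [NormedAddCommGroup H1] [NormedSpace ℂ H1]
    (T0 : H0 →L[ℂ] H0) (T1 : H1 →L[ℂ] H1) (X : H1 →L[ℂ] H0) :
    WithLp 2 (H0 × H1) →L[ℂ] WithLp 2 (H0 × H1) :=
  let E := WithLp.prodContinuousLinearEquiv 2 ℂ H0 H1
  (E.symm.toContinuousLinearMap).comp
    ((((T0.comp (ContinuousLinearMap.fst ℂ H0 H1)) +
        ((X.comp T1 - T0.comp X).comp (ContinuousLinearMap.snd ℂ H0 H1))).prod
      (T1.comp (ContinuousLinearMap.snd ℂ H0 H1))).comp E.toContinuousLinearMap)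
/-- The action of the Möbius map `z ↦ e^{iθ}(z − a)/(1 − conj(a) z)` on an operator:
`φ(A) = e^{iθ}(A − a)(I − conj(a)A)⁻¹`. -/
def mobiusOp {E : Type*} [NormedAddCommGroup E] [NormedSpace ℂ E]
    (θ : ℝ) (a : ℂ) (A : E →L[ℂ] E) : E →L[ℂ] E :=
  Complex.exp (θ * Complex.I) •
    ((A - a • (1 : E →L[ℂ] E)) * Ring.inverse (1 - (starRingEnd ℂ) a • A))

/-- Two bounded operators are similar if they are intertwined by a bounded
invertible operator. -/
def SimilarOp {E : Type*} [NormedAddCommGroup E] [NormedSpace ℂ E]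
    (A B : E →L[ℂ] E) : Prop :=
  ∃ S : (E →L[ℂ] E)ˣ, (S : E →L[ℂ] E) * A = B * (S : E →L[ℂ] E)

/-- A bounded operator is weakly homogeneous if its spectrum is contained in the closed
unit disc and `φ(A)` is similar to `A` for every Möbius map `φ`. -/
def WeaklyHomogeneousOp {E : Type*} [NormedAddCommGroup E] [NormedSpace ℂ E]
    (A : E →L[ℂ] E) : Prop :=
  spectrum ℂ A ⊆ closedBall (0 : ℂ) 1 ∧
    ∀ (θ : ℝ) (a : ℂ), ‖a‖ < 1 → SimilarOp (mobiusOp θ a A) A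

/-! Weak homogeneity only involves the algebra structure: the spectrum and similarity under
`φ(x) = e^{iθ}(x − a)(1 − ā x)⁻¹`. A unital algebra homomorphism shrinks spectra and maps units
to units, so it commutes with `φ` on weakly homogeneous elements (where `1 − ā x` is invertible)
and preserves weak homogeneity; so do products of algebras. The block operator `T` is the image
of `(T₀, T₁)` under such a homomorphism, namely `A ↦ S A S⁻¹` after `A ↦ A₀ ⊕ A₁`, where
`S (x, y) = (x + X y, y)`. -/

theorem map_ringInverse_of_isUnit {F M N : Type*} [MonoidWithZero M] [MonoidWithZero N]
    [FunLike F M N] [MonoidHomClass F M N] (f : F) {x : M} (hx : IsUnit x) :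
    f (Ring.inverse x) = Ring.inverse (f x) := by
  obtain ⟨u, rfl⟩ := hx
  rw [Ring.inverse_unit]
  exact (Ring.inverse_unit (Units.map (f : M →* N) u)).symm

section ComplexAlgebra

variable {R S : Type*} [Ring R] [Algebra ℂ R] [Ring S] [Algebra ℂ S]

def mobius (θ : ℝ) (a : ℂ) (x : R) : R :=
  Complex.exp (θ * Complex.I) • ((x - a • 1) * Ring.inverse (1 - (starRingEnd ℂ) a • x))

def IsWeaklyHomogeneous (x : R) : Prop :=
  spectrum ℂ x ⊆ closedBall (0 : ℂ) 1 ∧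
    ∀ (θ : ℝ) (a : ℂ), ‖a‖ < 1 → ∃ s : Rˣ, (s : R) * mobius θ a x = x * s

theorem weaklyHomogeneousOp_iff_isWeaklyHomogeneous {E : Type*} [NormedAddCommGroup E]
    [NormedSpace ℂ E] (A : E →L[ℂ] E) : WeaklyHomogeneousOp A ↔ IsWeaklyHomogeneous A :=
  Iff.rfl

theorem isUnit_one_sub_smul_of_spectrum_subset_closedBall {x : R}
    (hx : spectrum ℂ x ⊆ closedBall (0 : ℂ) 1) {c : ℂ} (hc : ‖c‖ < 1) : IsUnit (1 - c • x) := by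
  rcases eq_or_ne c 0 with rfl | hc0
  · simp
  have hinv : c⁻¹ ∉ spectrum ℂ x := fun hmem => by
    have := mem_closedBall_zero_iff.mp (hx hmem)
    rw [norm_inv] at this
    linarith [(one_lt_inv₀ (norm_pos_iff.mpr hc0)).mpr hc]
  have hfactor : 1 - c • x = algebraMap ℂ R c * (algebraMap ℂ R c⁻¹ - x) := by
    rw [mul_sub, ← map_mul, mul_inv_cancel₀ hc0, map_one, ← Algebra.smul_def]
  rw [hfactor]
  exact ((isUnit_iff_ne_zero.mpr hc0).map (algebraMap ℂ R)).mul (spectrum.notMem_iff.mp hinv)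

theorem AlgHom.map_mobius (f : R →ₐ[ℂ] S) {θ : ℝ} {a : ℂ} {x : R}
    (hx : IsUnit (1 - (starRingEnd ℂ) a • x)) : f (mobius θ a x) = mobius θ a (f x) := by
  simp [mobius, map_ringInverse_of_isUnit f hx]

theorem mobius_prodMk {θ : ℝ} {a : ℂ} {x : R} {y : S}
    (hx : IsUnit (1 - (starRingEnd ℂ) a • x)) (hy : IsUnit (1 - (starRingEnd ℂ) a • y)) :
    mobius θ a (x, y) = (mobius θ a x, mobius θ a y) := by
  have hxy : IsUnit (1 - (starRingEnd ℂ) a • (x, y)) := Prod.isUnit_iff.mpr ⟨hx, hy⟩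
  ext
  · exact (AlgHom.fst ℂ R S).map_mobius hxy
  · exact (AlgHom.snd ℂ R S).map_mobius hxy

theorem IsWeaklyHomogeneous.map {x : R} (hx : IsWeaklyHomogeneous x) (f : R →ₐ[ℂ] S) :
    IsWeaklyHomogeneous (f x) := by
  refine ⟨(AlgHom.spectrum_apply_subset f x).trans hx.1, fun θ a ha => ?_⟩
  obtain ⟨s, hs⟩ := hx.2 θ a ha
  have hu := isUnit_one_sub_smul_of_spectrum_subset_closedBall hx.1
    (c := (starRingEnd ℂ) a) (by rwa [RCLike.norm_conj])
  refine ⟨Units.map (f : R →* S) s, ?_⟩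
  simp only [Units.coe_map, MonoidHom.coe_coe]
  rw [← f.map_mobius hu, ← map_mul, hs, map_mul]

theorem IsWeaklyHomogeneous.prod {x : R} {y : S} (hx : IsWeaklyHomogeneous x)
    (hy : IsWeaklyHomogeneous y) : IsWeaklyHomogeneous (x, y) := by
  refine ⟨?_, fun θ a ha => ?_⟩
  · rw [Prod.spectrum_eq]
    exact Set.union_subset hx.1 hy.1
  obtain ⟨s, hs⟩ := hx.2 θ a ha
  obtain ⟨t, ht⟩ := hy.2 θ a ha
  have hca : ‖(starRingEnd ℂ) a‖ < 1 := by rwa [RCLike.norm_conj]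
  refine ⟨MulEquiv.prodUnits.symm (s, t), ?_⟩
  rw [mobius_prodMk (isUnit_one_sub_smul_of_spectrum_subset_closedBall hx.1 hca)
    (isUnit_one_sub_smul_of_spectrum_subset_closedBall hy.1 hca)]
  exact Prod.ext hs ht

end ComplexAlgebra

def ContinuousLinearMap.prodMapAlgHom (𝕜 E F : Type*) [NontriviallyNormedField 𝕜]
    [NormedAddCommGroup E] [NormedSpace 𝕜 E] [NormedAddCommGroup F] [NormedSpace 𝕜 F] :
    (E →L[𝕜] E) × (F →L[𝕜] F) →ₐ[𝕜] (E × F →L[𝕜] E × F) :=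
  AlgHom.ofLinearMap (ContinuousLinearMap.prodMapL 𝕜 E E F F).toLinearMap
    (by ext <;> simp) (fun _ _ => by ext <;> simp)

@[simp]
theorem ContinuousLinearMap.prodMapAlgHom_apply {𝕜 E F : Type*} [NontriviallyNormedField 𝕜]
    [NormedAddCommGroup E] [NormedSpace 𝕜 E] [NormedAddCommGroup F] [NormedSpace 𝕜 F]
    (p : (E →L[𝕜] E) × (F →L[𝕜] F)) : prodMapAlgHom 𝕜 E F p = p.1.prodMap p.2 :=
  rfl

theorem weaklyHomogeneous_blockT_general
    {H0 H1 : Type*} [NormedAddCommGroup H0] [InnerProductSpace ℂ H0]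
    [NormedAddCommGroup H1] [InnerProductSpace ℂ H1]
    (T0 : H0 →L[ℂ] H0) (T1 : H1 →L[ℂ] H1) (X : H1 →L[ℂ] H0)
    (h0 : WeaklyHomogeneousOp T0) (h1 : WeaklyHomogeneousOp T1) :
    WeaklyHomogeneousOp (blockT2 T0 T1 X) := by
  -- `shear (x, y) = (x + X y, y)`
  let shear : (H0 × H1) ≃L[ℂ] (H0 × H1) := (ContinuousLinearEquiv.prodComm ℂ H0 H1).trans
    (((ContinuousLinearEquiv.refl ℂ H1).skewProd (ContinuousLinearEquiv.refl ℂ H0) X).trans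
      (ContinuousLinearEquiv.prodComm ℂ H1 H0))
  let g := shear.trans (WithLp.prodContinuousLinearEquiv 2 ℂ H0 H1).symm
  have hT : blockT2 T0 T1 X =
      (g.conjContinuousAlgEquiv.toAlgHom.comp (ContinuousLinearMap.prodMapAlgHom ℂ H0 H1))
        (T0, T1) := by
    ext z
    simp [blockT2, g, shear, sub_add_eq_add_sub, add_sub_assoc]
  rw [weaklyHomogeneousOp_iff_isWeaklyHomogeneous, hT]
  exact (IsWeaklyHomogeneous.prod h0 h1).map _

/-- Lemma 4.1: if `T₀` and `T₁` are weakly homogeneous, then so is the block operator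
`T = [[T₀, XT₁ − T₀X], [0, T₁]]` on `H₀ ⊕ H₁`. -/
theorem weaklyHomogeneous_blockT
    {H0 H1 : Type*} [NormedAddCommGroup H0] [InnerProductSpace ℂ H0] [CompleteSpace H0]
    [NormedAddCommGroup H1] [InnerProductSpace ℂ H1] [CompleteSpace H1]
    (T0 : H0 →L[ℂ] H0) (T1 : H1 →L[ℂ] H1) (X : H1 →L[ℂ] H0)
    (h0 : WeaklyHomogeneousOp T0) (h1 : WeaklyHomogeneousOp T1) :
    WeaklyHomogeneousOp (blockT2 T0 T1 X) :=
  weaklyHomogeneous_blockT_general T0 T1 X h0 h1
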